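/- On ℝ³ \ {0}, for any l ∈ ℕ and s ∈ ℂ, the Laplacian of n̂_L r^s equals (s−l)(s+l+1) n̂_L r^{s−2}. Consequently, for i ∈ ℕ, the i-fold iterated inverse given by successive division, namely n̂_L r^{l+2i} mapped back by Δ, satisfies Δ^i ( (2l+1)!!/((2i)!!(2l+2i+1)!!) · r^{2i} x̂_L ) = x̂_L, i.e. (Δ̃⁻¹)^i[x̂_L] = ((2l+1)!!/((2i)!!(2l+2i+1)!!)) r^{2i} x̂_L. -/

import Mathlib

/-!
On `x ≠ 0`, `n̂_L = r^{-l} P_L` with `P_L(x) = Π_{LJ} x^J`, where `Π_L` is the STF part of the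
basis tensor `e_L` (the STF part is an orthogonal projection, hence self-adjoint). Differentiating
`T_J x^J` for a symmetric `T` contracts one index with `e_i`, so `P_L` is homogeneous of degree `l`
and harmonic (two equal derivatives produce a trace of `Π_L`). For such a `P`, the product rule
`Δ(P g) = ΔP g + 2 ∇P·∇g + P Δg` with `∇ r^c = c r^{c-2} x`, `Δ r^c = c(c+1) r^{c-2}` and Euler's
identity `x·∇P = l P` gives `Δ(P r^c) = c(c+2l+1) P r^{c-2}`. Taking `c = s - l` is the first claim;
iterating with `c = 2n` produces the factors `2n(2n+2l+1)`, which the double factorials collect.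
-/

open scoped Nat

/-- A rank-`l` Cartesian tensor on ℝ³, given by its components. -/
abbrev Tensor (l : ℕ) := (Fin l → Fin 3) → ℝ

/-- The natural inner product of two rank-`l` tensors (full contraction). -/
noncomputable def tInner {l : ℕ} (S T : Tensor l) : ℝ :=
  ∑ I : Fin l → Fin 3, S I * T I

/-- A tensor is symmetric if invariant under all index permutations. -/
def IsSym {l : ℕ} (T : Tensor l) : Prop :=
  ∀ (σ : Equiv.Perm (Fin l)) (I : Fin l → Fin 3), T (I ∘ σ) = T I

/-- A tensor is trace-free if the contraction of any pair of distinct indices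
vanishes. -/
def IsTraceFree {l : ℕ} (T : Tensor l) : Prop :=
  ∀ p q : Fin l, p ≠ q → ∀ I : Fin l → Fin 3,
    ∑ a : Fin 3, T (Function.update (Function.update I p a) q a) = 0

/-- Symmetric and trace-free. -/
def IsSTF {l : ℕ} (T : Tensor l) : Prop := IsSym T ∧ IsTraceFree T

/-- `That` is the symmetric trace-free part of `T`: it is STF and `T − That`
is orthogonal to every STF tensor (i.e. `That` is the orthogonal projection of
`T` onto the subspace of STF tensors). -/
def IsSTFPartOf {l : ℕ} (That T : Tensor l) : Prop :=
  IsSTF That ∧ ∀ S : Tensor l, IsSTF S → tInner (T - That) S = 0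

/-- The `l`-fold tensor product of a vector with itself. -/
def vecPow (n : Fin 3 → ℝ) (l : ℕ) : Tensor l := fun I => ∏ j, n (I j)

noncomputable section

abbrev E3 := EuclideanSpace ℝ (Fin 3)

/-- The flat-space Laplacian: the sum of the second Cartesian partial
derivatives. -/
def lap (g : E3 → ℂ) : E3 → ℂ := fun x =>
  ∑ i : Fin 3,
    fderiv ℝ (fun y => fderiv ℝ g y (EuclideanSpace.single i 1)) x
      (EuclideanSpace.single i 1)

open Filter Topology Complex

def partialDeriv (i : Fin 3) (f : E3 → ℂ) (y : E3) : ℂ :=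
  fderiv ℝ f y (EuclideanSpace.single i 1)

section PartialDeriv

variable {f g : E3 → ℂ} {x y : E3}

theorem lap_eq_sum_partialDeriv (f : E3 → ℂ) (x : E3) :
    lap f x = ∑ i, partialDeriv i (partialDeriv i f) x := rfl

theorem partialDeriv_congr (i : Fin 3) (h : f =ᶠ[𝓝 y] g) :
    partialDeriv i f y = partialDeriv i g y := by
  rw [partialDeriv, partialDeriv, h.fderiv_eq]

theorem HasFDerivAt.partialDeriv_eq {L : E3 →L[ℝ] ℂ} (h : HasFDerivAt f L y) (i : Fin 3) :
    partialDeriv i f y = L (EuclideanSpace.single i 1) := by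
  rw [partialDeriv, h.fderiv]

theorem partialDeriv_add (i : Fin 3) (hf : DifferentiableAt ℝ f y) (hg : DifferentiableAt ℝ g y) :
    partialDeriv i (fun y => f y + g y) y = partialDeriv i f y + partialDeriv i g y := by
  rw [(hf.hasFDerivAt.fun_add hg.hasFDerivAt).partialDeriv_eq]
  rfl

theorem partialDeriv_mul (i : Fin 3) (hf : DifferentiableAt ℝ f y) (hg : DifferentiableAt ℝ g y) :
    partialDeriv i (fun y => f y * g y) y = partialDeriv i f y * g y + f y * partialDeriv i g y := by
  rw [(hf.hasFDerivAt.fun_mul hg.hasFDerivAt).partialDeriv_eq]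
  simp only [add_apply, smul_apply, smul_eq_mul, partialDeriv]
  ring

theorem partialDeriv_sum {ι : Type*} (s : Finset ι) (F : ι → E3 → ℂ) (i : Fin 3)
    (hF : ∀ j ∈ s, DifferentiableAt ℝ (F j) y) :
    partialDeriv i (fun y => ∑ j ∈ s, F j y) y = ∑ j ∈ s, partialDeriv i (F j) y := by
  simp [partialDeriv, fderiv_fun_sum hF]

theorem partialDeriv_const (i : Fin 3) (c : ℂ) : partialDeriv i (fun _ => c) y = 0 := by
  simp [partialDeriv]

theorem partialDeriv_const_mul (i : Fin 3) (c : ℂ) (hf : DifferentiableAt ℝ f y) :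
    partialDeriv i (fun y => c * f y) y = c * partialDeriv i f y := by
  rw [partialDeriv_mul i (differentiableAt_const c) hf, partialDeriv_const]
  ring

@[fun_prop]
theorem contDiff_ofReal_coord (j : Fin 3) {n : WithTop ℕ∞} :
    ContDiff ℝ n (fun y : E3 => (y j : ℂ)) :=
  (ofRealCLM.comp (EuclideanSpace.proj j : E3 →L[ℝ] ℝ)).contDiff

@[fun_prop]
theorem differentiable_ofReal_coord (j : Fin 3) : Differentiable ℝ (fun y : E3 => (y j : ℂ)) :=
  (ofRealCLM.comp (EuclideanSpace.proj j : E3 →L[ℝ] ℝ)).differentiable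

theorem partialDeriv_ofReal_coord (i j : Fin 3) :
    partialDeriv i (fun y : E3 => (y j : ℂ)) y = if j = i then 1 else 0 := by
  have h : HasFDerivAt (fun y : E3 => (y j : ℂ)) (ofRealCLM.comp (EuclideanSpace.proj j)) y :=
    (ofRealCLM.comp (EuclideanSpace.proj j : E3 →L[ℝ] ℝ)).hasFDerivAt
  rw [h.partialDeriv_eq]
  simp [apply_ite]

theorem lap_congr_of_eqOn {U : Set E3} (hU : IsOpen U) (h : Set.EqOn f g U) :
    Set.EqOn (lap f) (lap g) U := by
  have hpd : ∀ i, Set.EqOn (partialDeriv i f) (partialDeriv i g) U := fun i y hy =>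
    partialDeriv_congr i (eventuallyEq_of_mem (hU.mem_nhds hy) h)
  intro x hx
  simp only [lap_eq_sum_partialDeriv]
  exact Finset.sum_congr rfl fun i _ =>
    partialDeriv_congr i (eventuallyEq_of_mem (hU.mem_nhds hx) (hpd i))

theorem iterate_lap_congr_of_eqOn {U : Set E3} (hU : IsOpen U) (h : Set.EqOn f g U) (n : ℕ) :
    Set.EqOn (lap^[n] f) (lap^[n] g) U := by
  induction n generalizing f g with
  | zero => exact h
  | succ n ih => exact ih (lap_congr_of_eqOn hU h)

theorem ContDiffAt.differentiableAt_partialDeriv (hf : ContDiffAt ℝ 2 f x) (i : Fin 3) :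
    DifferentiableAt ℝ (partialDeriv i f) x :=
  ((hf.fderiv_right (m := 1) (by norm_num)).clm_apply contDiffAt_const).differentiableAt
    (by norm_num)

theorem lap_mul (hf : ContDiffAt ℝ 2 f x) (hg : ContDiffAt ℝ 2 g x) :
    lap (fun y => f y * g y) x
      = lap f x * g x + 2 * ∑ i, partialDeriv i f x * partialDeriv i g x + f x * lap g x := by
  have hdiff : ∀ᶠ y in 𝓝 x, DifferentiableAt ℝ f y ∧ DifferentiableAt ℝ g y := by
    filter_upwards [hf.eventually (by simp), hg.eventually (by simp)] with y hfy hgy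
    exact ⟨hfy.differentiableAt (by norm_num), hgy.differentiableAt (by norm_num)⟩
  have hfirst : ∀ i, partialDeriv i (fun y => f y * g y)
      =ᶠ[𝓝 x] fun y => partialDeriv i f y * g y + f y * partialDeriv i g y := fun i => by
    filter_upwards [hdiff] with y hy using partialDeriv_mul i hy.1 hy.2
  have hf1 := hf.differentiableAt (by norm_num)
  have hg1 := hg.differentiableAt (by norm_num)
  have hf2 := hf.differentiableAt_partialDeriv
  have hg2 := hg.differentiableAt_partialDeriv
  simp only [lap_eq_sum_partialDeriv, Finset.mul_sum, Finset.sum_mul, ← Finset.sum_add_distrib]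
  refine Finset.sum_congr rfl fun i _ => ?_
  rw [partialDeriv_congr i (hfirst i), partialDeriv_add i ((hf2 i).fun_mul hg1) (hf1.fun_mul (hg2 i)),
    partialDeriv_mul i (hf2 i) hg1, partialDeriv_mul i hf1 (hg2 i)]
  ring

end PartialDeriv

section RadialPower

variable {E : Type*} [NormedAddCommGroup E] [InnerProductSpace ℝ E] {x : E}

theorem hasFDerivAt_norm (hx : x ≠ 0) :
    HasFDerivAt (fun y : E => ‖y‖) (‖x‖⁻¹ • innerSL ℝ x) x := by
  have h := (hasStrictFDerivAt_norm_sq x).hasFDerivAt.sqrt (by positivity)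
  simp only [Real.sqrt_sq (norm_nonneg _)] at h
  refine h.congr_fderiv ?_
  ext v
  simp only [one_div, mul_inv_rev, smul_apply, coe_innerSL_apply, nsmul_eq_mul, Nat.cast_ofNat,
    smul_eq_mul]
  field_simp

theorem hasFDerivAt_norm_cpow (hx : x ≠ 0) (c : ℂ) :
    HasFDerivAt (fun y : E => (‖y‖ : ℂ) ^ c)
      ((c * (‖x‖ : ℂ) ^ (c - 2)) • ofRealCLM.comp (innerSL ℝ x)) x := by
  have hr : (‖x‖ : ℂ) ≠ 0 := by simpa using hx
  have h := (hasStrictDerivAt_cpow_const (c := c) (ofReal_mem_slitPlane.2 (norm_pos_iff.2 hx))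
    ).hasDerivAt.comp_hasFDerivAt x (ofRealCLM.hasFDerivAt.comp x (hasFDerivAt_norm hx))
  refine h.congr_fderiv ?_
  ext v
  simp only [ContinuousLinearMap.comp_smulₛₗ, map_inv₀, Real.ringHom_apply, smul_apply,
    ContinuousLinearMap.comp_apply, coe_innerSL_apply, ofRealCLM_apply, real_smul, ofReal_inv,
    smul_eq_mul]
  rw [cpow_sub _ _ hr, cpow_sub _ _ hr, cpow_one, cpow_two]
  field_simp

theorem contDiffAt_norm_cpow (hx : x ≠ 0) (c : ℂ) {n : WithTop ℕ∞} :
    ContDiffAt ℝ n (fun y : E => (‖y‖ : ℂ) ^ c) x := by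
  have hpow : ContDiffAt ℂ n (fun z : ℂ => z ^ c) (‖x‖ : ℂ) :=
    (analyticAt_id.cpow analyticAt_const (ofReal_mem_slitPlane.2 (norm_pos_iff.2 hx))).contDiffAt
  exact hpow.restrict_scalars ℝ |>.comp x
    (ofRealCLM.contDiff.contDiffAt.comp x (contDiffAt_norm ℝ hx))

end RadialPower

theorem partialDeriv_norm_cpow {y : E3} (hy : y ≠ 0) (c : ℂ) (i : Fin 3) :
    partialDeriv i (fun y : E3 => (‖y‖ : ℂ) ^ c) y = c * y i * (‖y‖ : ℂ) ^ (c - 2) := by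
  rw [(hasFDerivAt_norm_cpow hy c).partialDeriv_eq]
  simp only [smul_apply, ContinuousLinearMap.comp_apply, coe_innerSL_apply,
    EuclideanSpace.inner_single_right, Real.ringHom_apply, one_mul, ofRealCLM_apply, smul_eq_mul]
  ring

theorem sum_ofReal_coord_mul_self (x : E3) : ∑ i, (x i : ℂ) * x i = (‖x‖ : ℂ) ^ 2 := by
  rw [← ofReal_pow, EuclideanSpace.norm_sq_eq]
  simp only [Real.norm_eq_abs, sq_abs]
  push_cast
  simp [sq]

theorem lap_norm_cpow {x : E3} (hx : x ≠ 0) (c : ℂ) :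
    lap (fun y : E3 => (‖y‖ : ℂ) ^ c) x = c * (c + 1) * (‖x‖ : ℂ) ^ (c - 2) := by
  have hr : (‖x‖ : ℂ) ≠ 0 := by simpa using hx
  have hfirst : ∀ i, partialDeriv i (fun y : E3 => (‖y‖ : ℂ) ^ c)
      =ᶠ[𝓝 x] fun y => c * y i * (‖y‖ : ℂ) ^ (c - 2) := fun i =>
    eventually_ne_nhds hx |>.mono fun y hy => partialDeriv_norm_cpow hy c i
  have hsecond : ∀ i, partialDeriv i (fun y : E3 => c * y i * (‖y‖ : ℂ) ^ (c - 2)) x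
      = c * (‖x‖ : ℂ) ^ (c - 2) + c * x i * ((c - 2) * x i * (‖x‖ : ℂ) ^ (c - 2 - 2)) := fun i => by
    rw [partialDeriv_mul i (by fun_prop)
        ((contDiffAt_norm_cpow hx _ (n := 1)).differentiableAt one_ne_zero),
      partialDeriv_const_mul i c (by fun_prop), partialDeriv_ofReal_coord, partialDeriv_norm_cpow hx]
    simp
  have hpow : (‖x‖ : ℂ) ^ (c - 2 - 2) * (‖x‖ : ℂ) ^ 2 = (‖x‖ : ℂ) ^ (c - 2) := by
    rw [← cpow_natCast, ← cpow_add _ _ hr]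
    norm_num
  calc lap (fun y : E3 => (‖y‖ : ℂ) ^ c) x
      = ∑ i, (c * (‖x‖ : ℂ) ^ (c - 2) + c * (c - 2) * (‖x‖ : ℂ) ^ (c - 2 - 2) * (x i * x i)) := by
        simp only [lap_eq_sum_partialDeriv, partialDeriv_congr _ (hfirst _), hsecond]
        congr! 1 with i
        ring
    _ = c * (c + 1) * (‖x‖ : ℂ) ^ (c - 2) := by
        rw [Finset.sum_add_distrib, ← Finset.mul_sum _ _ (c * (c - 2) * _),
          sum_ofReal_coord_mul_self, mul_assoc _ _ (_ ^ 2), hpow]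
        simp only [Finset.sum_const, Finset.card_univ, Fintype.card_fin, nsmul_eq_mul, Nat.cast_ofNat]
        ring

theorem lap_mul_norm_cpow {u : E3 → ℂ} {x : E3} (hx : x ≠ 0) (hu : ContDiffAt ℝ 2 u x)
    (hharm : lap u x = 0) {m : ℂ} (hhom : ∑ i, (x i : ℂ) * partialDeriv i u x = m * u x)
    (c : ℂ) :
    lap (fun y => u y * (‖y‖ : ℂ) ^ c) x = c * (c + 2 * m + 1) * u x * (‖x‖ : ℂ) ^ (c - 2) := by
  have hcross : ∑ i, partialDeriv i u x * partialDeriv i (fun y : E3 => (‖y‖ : ℂ) ^ c) x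
      = c * (‖x‖ : ℂ) ^ (c - 2) * (m * u x) := by
    simp only [partialDeriv_norm_cpow hx, ← hhom, Finset.mul_sum]
    congr! 1 with i
    ring
  rw [lap_mul hu (contDiffAt_norm_cpow hx c), hharm, lap_norm_cpow hx, hcross]
  ring

theorem sum_fin_succ_fun {α M : Type*} [Fintype α] [AddCommMonoid M] {m : ℕ}
    (F : (Fin (m + 1) → α) → M) :
    ∑ J, F J = ∑ a, ∑ t : Fin m → α, F (Fin.cons a t) := by
  rw [← (Fin.consEquiv fun _ => α).sum_comp, Fintype.sum_prod_type]
  rfl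

def tensorPoly {m : ℕ} (T : Tensor m) (y : E3) : ℂ :=
  ∑ J : Fin m → Fin 3, (T J : ℂ) * ∏ j, (y (J j) : ℂ)

def Tensor.slice {m : ℕ} (T : Tensor (m + 1)) (i : Fin 3) : Tensor m := fun t => T (Fin.cons i t)

def Tensor.trace {m : ℕ} (T : Tensor (m + 2)) : Tensor m :=
  fun t => ∑ a, T (Fin.cons a (Fin.cons a t))

section TensorPoly

variable {m : ℕ}

theorem IsSym.slice {T : Tensor (m + 1)} (hT : IsSym T) (i : Fin 3) : IsSym (T.slice i) := by
  intro σ t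
  refine (congrArg T ?_).trans (hT (Equiv.Perm.decomposeFin.symm (0, σ)) (Fin.cons i t))
  ext j
  refine Fin.cases ?_ (fun k => ?_) j <;> simp [Equiv.Perm.decomposeFin_symm_apply_succ]

theorem IsSym.slice_comm {T : Tensor (m + 2)} (hT : IsSym T) (i k : Fin 3) :
    (T.slice i).slice k = (T.slice k).slice i := by
  ext t
  refine (congrArg T ?_).trans (hT (Equiv.swap 0 1) (Fin.cons k (Fin.cons i t)))
  ext j
  refine Fin.cases ?_ (fun j => Fin.cases ?_ (fun j => ?_) j) j <;>
    simp [Equiv.swap_apply_of_ne_of_ne (Fin.succ_ne_zero _) (Fin.succ_succ_ne_one _)]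

theorem IsTraceFree.trace_eq_zero {T : Tensor (m + 2)} (hT : IsTraceFree T) : T.trace = 0 := by
  ext t
  refine Eq.trans (Finset.sum_congr rfl fun a _ => congrArg T ?_)
    (hT 0 1 (by simp) (Fin.cons 0 (Fin.cons 0 t)))
  ext j
  refine Fin.cases ?_ (fun j => Fin.cases ?_ (fun j => ?_) j) j <;>
    simp [Function.update_of_ne (Fin.succ_succ_ne_one _)]

theorem IsSTF.add {S T : Tensor m} (hS : IsSTF S) (hT : IsSTF T) : IsSTF (S + T) := by
  refine ⟨fun σ I => ?_, fun p q hpq I => ?_⟩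
  · simp only [Pi.add_apply, hS.1 σ I, hT.1 σ I]
  · simp only [Pi.add_apply, Finset.sum_add_distrib, hS.2 p q hpq I, hT.2 p q hpq I, add_zero]

theorem IsSTF.smul {T : Tensor m} (hT : IsSTF T) (a : ℝ) : IsSTF (a • T) := by
  refine ⟨fun σ I => ?_, fun p q hpq I => ?_⟩
  · simp only [Pi.smul_apply, hT.1 σ I]
  · simp only [Pi.smul_apply, smul_eq_mul, ← Finset.mul_sum, hT.2 p q hpq I, mul_zero]

theorem tensorPoly_succ (T : Tensor (m + 1)) (y : E3) :
    tensorPoly T y = ∑ i, (y i : ℂ) * tensorPoly (T.slice i) y := by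
  simp only [tensorPoly, sum_fin_succ_fun, Finset.mul_sum, Fin.prod_univ_succ, Fin.cons_zero,
    Fin.cons_succ, Tensor.slice]
  congr! 2 with i t
  ring

theorem tensorPoly_rank_zero (T : Tensor 0) : tensorPoly T = fun _ => tensorPoly T 0 := by
  ext y
  simp [tensorPoly]

theorem tensorPoly_smul (a : ℝ) (T : Tensor m) (y : E3) :
    tensorPoly (a • T) y = a * tensorPoly T y := by
  simp only [tensorPoly, Finset.mul_sum, Pi.smul_apply, smul_eq_mul, ofReal_mul, mul_assoc]

theorem sum_tensorPoly_slice_slice (T : Tensor (m + 2)) (y : E3) :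
    ∑ i, tensorPoly ((T.slice i).slice i) y = tensorPoly T.trace y := by
  simp only [tensorPoly, Tensor.slice, Tensor.trace, ofReal_sum, Finset.sum_mul]
  exact Finset.sum_comm

theorem contDiff_tensorPoly (T : Tensor m) {n : WithTop ℕ∞} : ContDiff ℝ n (tensorPoly T) := by
  unfold tensorPoly
  fun_prop

@[fun_prop]
theorem differentiable_tensorPoly (T : Tensor m) : Differentiable ℝ (tensorPoly T) :=
  (contDiff_tensorPoly T (n := 1)).differentiable one_ne_zero

theorem partialDeriv_tensorPoly_rank_zero (T : Tensor 0) (i : Fin 3) :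
    partialDeriv i (tensorPoly T) = 0 := by
  ext y
  rw [tensorPoly_rank_zero, partialDeriv_const, Pi.zero_apply]

theorem partialDeriv_tensorPoly_succ (T : Tensor (m + 1)) (k : Fin 3) (y : E3) :
    partialDeriv k (tensorPoly T) y
      = tensorPoly (T.slice k) y + ∑ i, (y i : ℂ) * partialDeriv k (tensorPoly (T.slice i)) y := by
  rw [funext (tensorPoly_succ T), partialDeriv_sum _ _ _ fun i _ => by fun_prop]
  simp only [partialDeriv_mul k (differentiable_ofReal_coord _ y) (differentiable_tensorPoly _ y),
    partialDeriv_ofReal_coord, Finset.sum_add_distrib, ite_mul, one_mul, zero_mul,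
    Finset.sum_ite_eq', Finset.mem_univ, if_true]

theorem IsSym.partialDeriv_tensorPoly {T : Tensor (m + 1)} (hT : IsSym T) (k : Fin 3) (y : E3) :
    partialDeriv k (tensorPoly T) y = (m + 1) * tensorPoly (T.slice k) y := by
  induction m with
  | zero => simp [partialDeriv_tensorPoly_succ, partialDeriv_tensorPoly_rank_zero]
  | succ m ih =>
    have hslice : ∀ i, partialDeriv k (tensorPoly (T.slice i)) y
        = (m + 1) * tensorPoly ((T.slice k).slice i) y := fun i => by
      rw [ih (hT.slice i), hT.slice_comm]
    simp only [partialDeriv_tensorPoly_succ, hslice, tensorPoly_succ (T.slice k) y,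
      Finset.mul_sum]
    push_cast
    rw [← Finset.sum_add_distrib]
    congr! 1
    ring

theorem IsSym.sum_coord_mul_partialDeriv_tensorPoly {T : Tensor m} (hT : IsSym T) (y : E3) :
    ∑ i, (y i : ℂ) * partialDeriv i (tensorPoly T) y = m * tensorPoly T y := by
  cases m with
  | zero => simp [partialDeriv_tensorPoly_rank_zero]
  | succ m =>
    simp only [hT.partialDeriv_tensorPoly, tensorPoly_succ T y, Finset.mul_sum]
    push_cast
    congr! 1
    ring

theorem IsSym.lap_tensorPoly {T : Tensor (m + 2)} (hT : IsSym T) (y : E3) :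
    lap (tensorPoly T) y = (m + 2) * (m + 1) * tensorPoly T.trace y := by
  have h : ∀ i, partialDeriv i (tensorPoly T)
      = fun y => (m + 1 + 1 : ℂ) * tensorPoly (T.slice i) y :=
    fun i => funext fun y => by exact_mod_cast hT.partialDeriv_tensorPoly i y
  simp only [lap_eq_sum_partialDeriv, h,
    partialDeriv_const_mul _ _ (differentiable_tensorPoly _ y),
    (hT.slice _).partialDeriv_tensorPoly, ← Finset.mul_sum, sum_tensorPoly_slice_slice]
  ring

theorem IsSTF.lap_tensorPoly {T : Tensor m} (hT : IsSTF T) (y : E3) :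
    lap (tensorPoly T) y = 0 := by
  match m, T, hT with
  | 0, T, _ => simp [lap_eq_sum_partialDeriv, partialDeriv_tensorPoly_rank_zero, partialDeriv]
  | 1, T, hT =>
    have h : ∀ i, partialDeriv i (tensorPoly T) = tensorPoly (T.slice i) :=
      fun i => funext fun y => by simpa using hT.1.partialDeriv_tensorPoly i y
    simp [lap_eq_sum_partialDeriv, h, partialDeriv_tensorPoly_rank_zero]
  | m + 2, T, hT =>
    rw [hT.1.lap_tensorPoly, hT.2.trace_eq_zero]
    simp [tensorPoly]

theorem IsSTF.lap_tensorPoly_mul_norm_cpow {T : Tensor m} (hT : IsSTF T) {x : E3} (hx : x ≠ 0)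
    (c : ℂ) :
    lap (fun y => tensorPoly T y * (‖y‖ : ℂ) ^ c) x
      = c * (c + 2 * m + 1) * tensorPoly T x * (‖x‖ : ℂ) ^ (c - 2) :=
  lap_mul_norm_cpow hx (contDiff_tensorPoly T).contDiffAt (hT.lap_tensorPoly x)
    (hT.1.sum_coord_mul_partialDeriv_tensorPoly x) c

theorem IsSTF.lap_tensorPoly_mul_norm_pow_succ {T : Tensor m} (hT : IsSTF T) (n : ℕ) {x : E3}
    (hx : x ≠ 0) :
    lap (fun y => tensorPoly T y * (‖y‖ : ℂ) ^ (2 * (n + 1))) x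
      = tensorPoly (((2 * n + 2) * (2 * m + 2 * n + 3) : ℝ) • T) x * (‖x‖ : ℂ) ^ (2 * n) := by
  have h := hT.lap_tensorPoly_mul_norm_cpow hx (2 * (n + 1) : ℕ)
  simp only [cpow_natCast] at h
  rw [h, tensorPoly_smul, show ((2 * (n + 1) : ℕ) : ℂ) - 2 = (2 * n : ℕ) by push_cast; ring,
    cpow_natCast]
  push_cast
  ring

theorem IsSTF.iterate_lap_tensorPoly_mul_norm_pow {T : Tensor m} (hT : IsSTF T) (n : ℕ)
    {x : E3} (hx : x ≠ 0) :
    lap^[n] (fun y => tensorPoly T y * (‖y‖ : ℂ) ^ (2 * n)) x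
      = ((2 * n)‼ * (2 * m + 2 * n + 1)‼ / (2 * m + 1)‼ : ℂ) * tensorPoly T x := by
  induction n generalizing T with
  | zero =>
    have : ((2 * m + 1)‼ : ℂ) ≠ 0 := by exact_mod_cast (Nat.doubleFactorial_pos _).ne'
    simp [this]
  | succ n ih =>
    rw [Function.iterate_succ_apply,
      iterate_lap_congr_of_eqOn isOpen_compl_singleton
        (fun y hy => hT.lap_tensorPoly_mul_norm_pow_succ n hy) n hx,
      ih (hT.smul _), tensorPoly_smul, show 2 * (n + 1) = 2 * n + 2 by ring,
      show 2 * m + (2 * n + 2) + 1 = (2 * m + 2 * n + 1) + 2 by ring,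
      Nat.doubleFactorial_add_two, Nat.doubleFactorial_add_two]
    push_cast
    ring

end TensorPoly

def stfSubmodule (l : ℕ) : Submodule ℝ (EuclideanSpace ℝ (Fin l → Fin 3)) where
  carrier := {T | IsSTF T.ofLp}
  add_mem' hS hT := hS.add hT
  zero_mem' := ⟨fun _ _ => rfl, fun _ _ _ _ => by simp⟩
  smul_mem' a _ hT := hT.smul a

section STFPart

variable {l : ℕ}

theorem tInner_eq_inner (S T : Tensor l) :
    tInner S T = inner ℝ (WithLp.toLp 2 S) (WithLp.toLp 2 T) := by
  simp [tInner, PiLp.inner_apply, mul_comm]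

theorem exists_isSTFPartOf (T : Tensor l) : ∃ P, IsSTFPartOf P T := by
  let K := stfSubmodule l
  refine ⟨(K.starProjection (WithLp.toLp 2 T)).ofLp, K.starProjection_apply_mem _, fun S hS => ?_⟩
  have h := (K.mem_orthogonal' _).1 (K.sub_starProjection_mem_orthogonal (WithLp.toLp 2 T))
    (WithLp.toLp 2 S) hS
  rw [tInner_eq_inner, ← h]
  rfl

/-- `A_I = ⟪A, e_I⟫ = ⟪A, P⟫ = ⟪T, P⟫`, by the two orthogonality conditions. -/
theorem IsSTFPartOf.apply_eq_tInner {A T P : Tensor l} {I : Fin l → Fin 3}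
    (hA : IsSTFPartOf A T) (hP : IsSTFPartOf P (Pi.single I 1)) : A I = tInner T P := by
  have h1 := hP.2 A hA.1
  have h2 := hA.2 P hP.1
  simp only [tInner, Pi.sub_apply, sub_mul, Finset.sum_sub_distrib, Pi.single_apply, ite_mul,
    one_mul, zero_mul, Finset.sum_ite_eq', Finset.mem_univ, if_true, sub_eq_zero] at h1 h2
  rw [h1, tInner, h2]
  simp only [mul_comm]

theorem tensorPoly_eq_norm_pow_mul_tInner {x : E3} (hx : x ≠ 0) (T : Tensor l) :
    tensorPoly T x = ((‖x‖ ^ l * tInner (vecPow (fun i => x i / ‖x‖) l) T : ℝ) : ℂ) := by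
  have hr : (‖x‖ : ℂ) ^ l ≠ 0 := pow_ne_zero _ (by simpa using hx)
  simp only [tensorPoly, tInner, vecPow, Finset.prod_div_distrib, Finset.prod_const,
    Finset.card_univ, Fintype.card_fin, Finset.mul_sum]
  push_cast
  congr! 1
  field_simp

end STFPart

section AngularPart

variable {l : ℕ} {T : Tensor l} {N : E3 → ℝ}

theorem IsSTF.lap_mul_norm_cpow_of_tensorPoly_eq (hT : IsSTF T)
    (hN : ∀ y : E3, y ≠ 0 → tensorPoly T y = ((‖y‖ ^ l * N y : ℝ) : ℂ)) {x : E3} (hx : x ≠ 0)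
    (s : ℂ) :
    lap (fun y => (N y : ℂ) * (‖y‖ : ℂ) ^ s) x
      = (s - l) * (s + l + 1) * (N x : ℂ) * (‖x‖ : ℂ) ^ (s - 2) := by
  have hfun : Set.EqOn (fun y => (N y : ℂ) * (‖y‖ : ℂ) ^ s)
      (fun y => tensorPoly T y * (‖y‖ : ℂ) ^ (s - l)) {0}ᶜ := fun y hy => by
    have hr : (‖y‖ : ℂ) ≠ 0 := by simpa using hy
    simp only [hN y hy, cpow_sub _ _ hr, cpow_natCast]
    push_cast
    field_simp
  have hr : (‖x‖ : ℂ) ≠ 0 := by simpa using hx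
  rw [lap_congr_of_eqOn isOpen_compl_singleton hfun hx, hT.lap_tensorPoly_mul_norm_cpow hx, hN x hx]
  simp only [cpow_sub _ _ hr, cpow_natCast]
  push_cast
  field_simp
  ring

theorem IsSTF.iterate_lap_mul_norm_pow_of_tensorPoly_eq (hT : IsSTF T)
    (hN : ∀ y : E3, y ≠ 0 → tensorPoly T y = ((‖y‖ ^ l * N y : ℝ) : ℂ)) (n : ℕ) {x : E3}
    (hx : x ≠ 0) :
    lap^[n] (fun y => ((((2 * l + 1)‼ : ℝ) / (((2 * n)‼ : ℝ) * ((2 * l + 2 * n + 1)‼ : ℝ))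
        * ‖y‖ ^ (2 * n) * (‖y‖ ^ l * N y) : ℝ) : ℂ)) x = ((‖x‖ ^ l * N x : ℝ) : ℂ) := by
  set K : ℝ := (2 * l + 1)‼ / ((2 * n)‼ * (2 * l + 2 * n + 1)‼)
  have hfun : Set.EqOn (fun y => ((K * ‖y‖ ^ (2 * n) * (‖y‖ ^ l * N y) : ℝ) : ℂ))
      (fun y => tensorPoly (K • T) y * (‖y‖ : ℂ) ^ (2 * n)) {0}ᶜ := fun y hy => by
    simp only [tensorPoly_smul, hN y hy]
    push_cast
    ring
  rw [iterate_lap_congr_of_eqOn isOpen_compl_singleton hfun n hx,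
    (hT.smul K).iterate_lap_tensorPoly_mul_norm_pow n hx, tensorPoly_smul, hN x hx]
  have h1 : ((2 * l + 1)‼ : ℂ) ≠ 0 := by exact_mod_cast (Nat.doubleFactorial_pos _).ne'
  have h2 : ((2 * n)‼ : ℂ) ≠ 0 := by exact_mod_cast (Nat.doubleFactorial_pos _).ne'
  have h3 : ((2 * l + 2 * n + 1)‼ : ℂ) ≠ 0 := by exact_mod_cast (Nat.doubleFactorial_pos _).ne'
  simp only [K]
  push_cast
  field_simp

end AngularPart

theorem stmt19 (l : ℕ) (s : ℂ)
    (Nl : E3 → Tensor l)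
    (hNl : ∀ x : E3, x ≠ 0 →
      IsSTFPartOf (Nl x) (vecPow (fun i => x i / ‖x‖) l)) :
    (∀ x : E3, x ≠ 0 → ∀ I : Fin l → Fin 3,
      lap (fun y => (Nl y I : ℂ) * (‖y‖ : ℂ) ^ s) x
        = (s - l) * (s + l + 1) * (Nl x I : ℂ) * (‖x‖ : ℂ) ^ (s - 2)) ∧
    (∀ i : ℕ, ∀ x : E3, x ≠ 0 → ∀ I : Fin l → Fin 3,
      lap^[i]
        (fun y => ((((2 * l + 1)‼ : ℝ) / (((2 * i)‼ : ℝ) * ((2 * l + 2 * i + 1)‼ : ℝ))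
            * ‖y‖ ^ (2 * i) * (‖y‖ ^ l * Nl y I) : ℝ) : ℂ)) x
        = ((‖x‖ ^ l * Nl x I : ℝ) : ℂ)) := by
  choose P hP using fun I : Fin l → Fin 3 => exists_isSTFPartOf (Pi.single I 1 : Tensor l)
  have hpoly : ∀ I, ∀ y : E3, y ≠ 0 → tensorPoly (P I) y = ((‖y‖ ^ l * Nl y I : ℝ) : ℂ) :=
    fun I y hy => by rw [tensorPoly_eq_norm_pow_mul_tInner hy, (hNl y hy).apply_eq_tInner (hP I)]
  exact ⟨fun x hx I => (hP I).1.lap_mul_norm_cpow_of_tensorPoly_eq (hpoly I) hx s,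
    fun i x hx I => (hP I).1.iterate_lap_mul_norm_pow_of_tensorPoly_eq (hpoly I) i hx⟩

end
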